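/- arXiv:2412.18138 — 2 statements merged into one kernel-verified Lean document; each statement's English description precedes it below -/
import Mathlib

section
/- Assume group 1 has strictly higher base rate than group 2 and randomized classifiers are allowed. Let U* = 1 - min(n_1/n_+, λ·n_2/n_-)·(BR_1 - BR_2). Then for any classifier h^0, there exists a randomized classifier h' with zero disparity and utility at least U(h^0) if and only if U(h^0) ≤ U*. -/
noncomputable def disp (n11 n10 n21 n20 : ℝ) (p : Fin 4 → ℝ) : ℝ :=
  (p 0 * n11 + p 1 * n10) / (n11 + n10) - (p 2 * n21 + p 3 * n20) / (n21 + n20)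

noncomputable def util (n11 n10 n21 n20 lam : ℝ) (p : Fin 4 → ℝ) : ℝ :=
  (p 0 * n11 + p 2 * n21) / (n11 + n21) - lam * ((p 1 * n10 + p 3 * n20) / (n10 + n20))

/-!
A zero-disparity classifier has equal selection rates, so the share `(1 - p 0)·BR₁` of group 1
that it wrongly rejects plus the share `p 3·n₂₀/n₂` of group 2 that it wrongly accepts must
cover the base-rate gap `BR₁ - BR₂`. Each unit of the first costs `n₁/n₊` of utility and each unit
of the second `λ·n₂/n₋`, so the utility loss is at least `min(n₁/n₊, λ·n₂/n₋)·(BR₁ - BR₂)`.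
The bound is attained by spending the whole gap on the cheaper option: accept group-1
positives with probability `BR₂/BR₁` and everyone else perfectly, or classify perfectly
except for accepting group-2 negatives with probability `n₂·(BR₁ - BR₂)/n₂₀`.
-/

lemma vecCons_mem_Icc_zero_one {a b c d : ℝ} (ha : a ∈ Set.Icc 0 1) (hb : b ∈ Set.Icc 0 1)
    (hc : c ∈ Set.Icc 0 1) (hd : d ∈ Set.Icc 0 1) :
    ![a, b, c, d] ∈ Set.Icc (0 : Fin 4 → ℝ) 1 := by
  rw [← Set.pi_univ_Icc]
  intro i _
  fin_cases i <;> assumption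

section

variable {n11 n10 n21 n20 lam : ℝ} {p : Fin 4 → ℝ}

lemma baseRate_sub_le_of_disp_eq_zero (h11 : 0 < n11) (h10 : 0 < n10) (h21 : 0 < n21)
    (h20 : 0 < n20) (hp : p ∈ Set.Icc (0 : Fin 4 → ℝ) 1) (hd : disp n11 n10 n21 n20 p = 0) :
    n11 / (n11 + n10) - n21 / (n21 + n20) ≤
      (1 - p 0) * (n11 / (n11 + n10)) + p 3 * (n20 / (n21 + n20)) := by
  obtain ⟨hp0, hp1⟩ := hp
  have hSR1 : p 0 * (n11 / (n11 + n10)) ≤ (p 0 * n11 + p 1 * n10) / (n11 + n10) := by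
    rw [← mul_div_assoc]
    gcongr
    exact le_add_of_nonneg_right (mul_nonneg (hp0 1) h10.le)
  have hSR2 : (p 2 * n21 + p 3 * n20) / (n21 + n20) ≤
      n21 / (n21 + n20) + p 3 * (n20 / (n21 + n20)) := by
    rw [← mul_div_assoc, ← add_div]
    gcongr
    exact mul_le_of_le_one_left h21.le (hp1 2)
  unfold disp at hd
  linarith

lemma one_sub_util (h : n11 + n21 ≠ 0) :
    1 - util n11 n10 n21 n20 lam p = (1 - p 0) * n11 / (n11 + n21) +
      (1 - p 2) * n21 / (n11 + n21) + lam * ((p 1 * n10 + p 3 * n20) / (n10 + n20)) := by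
  unfold util
  field_simp
  ring

lemma util_le_of_disp_eq_zero (h11 : 0 < n11) (h10 : 0 < n10) (h21 : 0 < n21) (h20 : 0 < n20)
    (hlam : 0 ≤ lam) (hp : p ∈ Set.Icc (0 : Fin 4 → ℝ) 1) (hd : disp n11 n10 n21 n20 p = 0) :
    util n11 n10 n21 n20 lam p ≤
      1 - min ((n11 + n10) / (n11 + n21)) (lam * (n21 + n20) / (n10 + n20)) *
        (n11 / (n11 + n10) - n21 / (n21 + n20)) := by
  set m := min ((n11 + n10) / (n11 + n21)) (lam * (n21 + n20) / (n10 + n20))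
  have hm : 0 ≤ m := le_min (by positivity) (by positivity)
  obtain ⟨hp0, hp1⟩ := id hp
  suffices m * (n11 / (n11 + n10) - n21 / (n21 + n20)) ≤ 1 - util n11 n10 n21 n20 lam p by
    linarith
  calc m * (n11 / (n11 + n10) - n21 / (n21 + n20))
      ≤ m * ((1 - p 0) * (n11 / (n11 + n10)) + p 3 * (n20 / (n21 + n20))) := by
        gcongr
        exact baseRate_sub_le_of_disp_eq_zero h11 h10 h21 h20 hp hd
    _ ≤ (n11 + n10) / (n11 + n21) * ((1 - p 0) * (n11 / (n11 + n10))) +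
          lam * (n21 + n20) / (n10 + n20) * (p 3 * (n20 / (n21 + n20))) := by
        have : 0 ≤ 1 - p 0 := sub_nonneg.2 (hp1 0)
        have : 0 ≤ p 3 := hp0 3
        rw [mul_add]
        gcongr
        · exact min_le_left _ _
        · exact min_le_right _ _
    _ = (1 - p 0) * n11 / (n11 + n21) + lam * (p 3 * n20 / (n10 + n20)) := by
        field_simp
    _ ≤ 1 - util n11 n10 n21 n20 lam p := by
        have : 0 ≤ 1 - p 2 := sub_nonneg.2 (hp1 2)
        have hFN : p 3 * n20 / (n10 + n20) ≤ (p 1 * n10 + p 3 * n20) / (n10 + n20) := by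
          gcongr
          exact le_add_of_nonneg_left (mul_nonneg (hp0 1) h10.le)
        have : 0 ≤ (1 - p 2) * n21 / (n11 + n21) := by positivity
        rw [one_sub_util (by positivity)]
        linarith [mul_le_mul_of_nonneg_left hFN hlam]

lemma exists_disp_eq_zero_util_eq_of_lowering_group1_tpr (h11 : 0 < n11) (h10 : 0 < n10)
    (h21 : 0 < n21) (h20 : 0 < n20) (hBR : n21 / (n21 + n20) ≤ n11 / (n11 + n10)) :
    ∃ p ∈ Set.Icc (0 : Fin 4 → ℝ) 1, disp n11 n10 n21 n20 p = 0 ∧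
      util n11 n10 n21 n20 lam p =
        1 - (n11 + n10) / (n11 + n21) * (n11 / (n11 + n10) - n21 / (n21 + n20)) := by
  set t := n21 / (n21 + n20) / (n11 / (n11 + n10))
  have ht : t * n11 = n21 * (n11 + n10) / (n21 + n20) := by
    simp only [t]
    field_simp
  refine ⟨![t, 0, 1, 0], vecCons_mem_Icc_zero_one ⟨by positivity, ?_⟩ (by simp) (by simp) (by simp),
    ?_, ?_⟩
  · exact div_le_one_of_le₀ hBR (by positivity)
  · simp only [disp, Matrix.cons_val, zero_mul, add_zero, one_mul, ht]
    field_simp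
    ring
  · simp only [util, Matrix.cons_val, zero_mul, add_zero, one_mul, ht]
    field_simp
    ring

lemma exists_disp_eq_zero_util_eq_of_raising_group2_fpr (h11 : 0 < n11) (h10 : 0 < n10)
    (h21 : 0 < n21) (h20 : 0 < n20) (hBR : n21 / (n21 + n20) ≤ n11 / (n11 + n10)) :
    ∃ p ∈ Set.Icc (0 : Fin 4 → ℝ) 1, disp n11 n10 n21 n20 p = 0 ∧
      util n11 n10 n21 n20 lam p =
        1 - lam * (n21 + n20) / (n10 + n20) * (n11 / (n11 + n10) - n21 / (n21 + n20)) := by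
  set t := (n21 + n20) / n20 * (n11 / (n11 + n10) - n21 / (n21 + n20))
  have ht1 : t ≤ 1 := by
    have hBR1 : n11 / (n11 + n10) ≤ 1 := div_le_one_of_le₀ (by linarith) (by positivity)
    simp only [t]
    rw [div_mul_eq_mul_div, div_le_one h20, mul_sub, mul_div_cancel₀ _ (by positivity)]
    nlinarith
  refine ⟨![1, 0, 1, t], vecCons_mem_Icc_zero_one (by simp) (by simp) (by simp)
    ⟨by simp only [t]; have := sub_nonneg.2 hBR; positivity, ht1⟩, ?_, ?_⟩
  · simp only [disp, Matrix.cons_val, zero_mul, add_zero, one_mul, t]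
    field_simp
    ring
  · simp only [util, Matrix.cons_val, zero_mul, one_mul, zero_add, t]
    field_simp

lemma exists_disp_eq_zero_util_eq_threshold (h11 : 0 < n11) (h10 : 0 < n10)
    (h21 : 0 < n21) (h20 : 0 < n20) (hBR : n21 / (n21 + n20) ≤ n11 / (n11 + n10)) :
    ∃ p ∈ Set.Icc (0 : Fin 4 → ℝ) 1, disp n11 n10 n21 n20 p = 0 ∧
      util n11 n10 n21 n20 lam p =
        1 - min ((n11 + n10) / (n11 + n21)) (lam * (n21 + n20) / (n10 + n20)) *
          (n11 / (n11 + n10) - n21 / (n21 + n20)) := by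
  rcases min_choice ((n11 + n10) / (n11 + n21)) (lam * (n21 + n20) / (n10 + n20)) with h | h <;>
    rw [h]
  · exact exists_disp_eq_zero_util_eq_of_lowering_group1_tpr h11 h10 h21 h20 hBR
  · exact exists_disp_eq_zero_util_eq_of_raising_group2_fpr h11 h10 h21 h20 hBR

end

theorem zero_disparity_alternative_iff_utility_le_threshold_general
    (n11 n10 n21 n20 lam : ℝ)
    (h11 : 0 < n11) (h10 : 0 < n10) (h21 : 0 < n21) (h20 : 0 < n20) (hlam : 0 < lam)
    (hBR : n21 / (n21 + n20) < n11 / (n11 + n10))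
    (p0 : Fin 4 → ℝ) :
    (∃ p ∈ Set.Icc (0 : Fin 4 → ℝ) 1,
        disp n11 n10 n21 n20 p = 0 ∧
        util n11 n10 n21 n20 lam p0 ≤ util n11 n10 n21 n20 lam p)
      ↔ util n11 n10 n21 n20 lam p0 ≤
          1 - min ((n11 + n10) / (n11 + n21)) (lam * (n21 + n20) / (n10 + n20)) *
            (n11 / (n11 + n10) - n21 / (n21 + n20)) := by
  constructor
  · rintro ⟨p, hp, hd, hle⟩
    exact hle.trans (util_le_of_disp_eq_zero h11 h10 h21 h20 hlam.le hp hd)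
  · intro hle
    obtain ⟨p, hp, hd, hU⟩ := exists_disp_eq_zero_util_eq_threshold h11 h10 h21 h20 hBR.le
    exact ⟨p, hp, hd, hle.trans hU.ge⟩

/-- Theorem 1 of the paper: with `BR₁ > BR₂` and randomized classifiers
allowed, for any classifier `p₀` there exists a randomized classifier with zero
disparity and utility at least `U(p₀)` if and only if
`U(p₀) ≤ U* = 1 - min(n₁/n₊, λ·n₂/n₋)·(BR₁ - BR₂)`. -/
theorem zero_disparity_alternative_iff_utility_le_threshold
    (n11 n10 n21 n20 lam : ℝ)
    (h11 : 0 < n11) (h10 : 0 < n10) (h21 : 0 < n21) (h20 : 0 < n20) (hlam : 0 < lam)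
    (hBR : n21 / (n21 + n20) < n11 / (n11 + n10))
    (p0 : Fin 4 → ℝ) (hp0 : p0 ∈ Set.Icc (0 : Fin 4 → ℝ) 1) :
    (∃ p ∈ Set.Icc (0 : Fin 4 → ℝ) 1,
        disp n11 n10 n21 n20 p = 0 ∧
        util n11 n10 n21 n20 lam p0 ≤ util n11 n10 n21 n20 lam p)
      ↔ util n11 n10 n21 n20 lam p0 ≤
          1 - min ((n11 + n10) / (n11 + n21)) (lam * (n21 + n20) / (n10 + n20)) *
            (n11 / (n11 + n10) - n21 / (n21 + n20)) :=
  zero_disparity_alternative_iff_utility_le_threshold_general n11 n10 n21 n20 lam h11 h10 h21 h20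
    hlam hBR p0
end

section
/- If a classifier h^0 on a fixed finite population has utility U(h^0) strictly greater than the threshold U* = 1 - min(n_1/n_+, λ·n_2/n_-)·(BR_1 - BR_2), then every randomized classifier with utility at least U(h^0) has strictly positive disparity; in particular no zero-disparity alternative exists at that utility level. -/
/-!
A zero-disparity classifier selects both groups at a common rate `s`. If `s < BR₁`, at least
`n₁(BR₁ - s)` positives of group 1 go unselected, costing `(n₁/n₊)(BR₁ - s)` in TPR; if
`s > BR₂`, at least `n₂(s - BR₂)` negatives of group 2 are selected, costing
`λ(n₂/n₋)(s - BR₂)` in FPR. Whatever `s` is, the two costs add up to at least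
`min(n₁/n₊, λn₂/n₋)(BR₁ - BR₂)`, so the utility of such a classifier is at most `U*`.
-/

lemma min_mul_add_le {a b u v x y : ℝ} (ha : 0 ≤ a) (hb : 0 ≤ b) (hx : 0 ≤ x) (hy : 0 ≤ y)
    (hau : a * u ≤ x) (hbv : b * v ≤ y) : min a b * (u + v) ≤ x + y := by
  calc min a b * (u + v) ≤ min a b * (max u 0 + max v 0) := by
        gcongr <;> exact le_max_left _ _
    _ ≤ a * max u 0 + b * max v 0 := by
        rw [mul_add]
        gcongr
        exacts [min_le_left a b, min_le_right a b]
    _ = max (a * u) 0 + max (b * v) 0 := by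
        rw [mul_max_of_nonneg _ _ ha, mul_max_of_nonneg _ _ hb, mul_zero, mul_zero]
    _ ≤ x + y := add_le_add (max_le hau hx) (max_le hbv hy)

section FourCells

variable {n11 n10 n21 n20 lam : ℝ} {p : Fin 4 → ℝ}

lemma mul_baseRate_sub_selRate_le (h1 : n11 + n10 ≠ 0) (hpos : 0 < n11 + n21) (h10 : 0 ≤ n10)
    (hp1 : 0 ≤ p 1) :
    (n11 + n10) / (n11 + n21) * (n11 / (n11 + n10) - (p 0 * n11 + p 1 * n10) / (n11 + n10))
      ≤ n11 * (1 - p 0) / (n11 + n21) := by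
  have hrw : (n11 + n10) / (n11 + n21) *
      (n11 / (n11 + n10) - (p 0 * n11 + p 1 * n10) / (n11 + n10))
      = (n11 * (1 - p 0) - p 1 * n10) / (n11 + n21) := by
    field_simp
    ring
  rw [hrw]
  gcongr
  linarith [mul_nonneg hp1 h10]

lemma mul_selRate_sub_baseRate_le (h2 : n21 + n20 ≠ 0) (hneg : 0 ≤ n10 + n20) (h21 : 0 ≤ n21)
    (hlam : 0 ≤ lam) (hp2 : p 2 ≤ 1) :
    lam * (n21 + n20) / (n10 + n20) *
        ((p 2 * n21 + p 3 * n20) / (n21 + n20) - n21 / (n21 + n20))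
      ≤ lam * (n20 * p 3 / (n10 + n20)) := by
  have hrw : lam * (n21 + n20) / (n10 + n20) *
      ((p 2 * n21 + p 3 * n20) / (n21 + n20) - n21 / (n21 + n20))
      = lam * ((n20 * p 3 - (1 - p 2) * n21) / (n10 + n20)) := by
    field_simp
    ring
  rw [hrw]
  gcongr
  linarith [mul_nonneg (sub_nonneg.mpr hp2) h21]

lemma util_le_one_sub (hpos : 0 < n11 + n21) (h21 : 0 ≤ n21) (h10 : 0 ≤ n10)
    (hneg : 0 ≤ n10 + n20) (hlam : 0 ≤ lam) (hp : p ∈ Set.Icc 0 1) :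
    util n11 n10 n21 n20 lam p
      ≤ 1 - (n11 * (1 - p 0) / (n11 + n21) + lam * (n20 * p 3 / (n10 + n20))) := by
  have htp : (p 0 * n11 + p 2 * n21) / (n11 + n21) + n11 * (1 - p 0) / (n11 + n21) ≤ 1 := by
    have hp2 : p 2 ≤ 1 := hp.2 2
    rw [← add_div, div_le_one hpos]
    linarith [mul_le_mul_of_nonneg_right hp2 h21]
  have hfp : n20 * p 3 / (n10 + n20) ≤ (p 1 * n10 + p 3 * n20) / (n10 + n20) := by
    gcongr
    linarith [mul_nonneg (hp.1 1 : 0 ≤ p 1) h10]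
  unfold util
  linarith [mul_le_mul_of_nonneg_left hfp hlam]

lemma util_le_threshold_of_disp_eq_zero (h11 : 0 < n11) (h10 : 0 < n10) (h21 : 0 < n21)
    (h20 : 0 < n20) (hlam : 0 < lam) (hp : p ∈ Set.Icc 0 1)
    (hd : disp n11 n10 n21 n20 p = 0) :
    util n11 n10 n21 n20 lam p ≤
      1 - min ((n11 + n10) / (n11 + n21)) (lam * (n21 + n20) / (n10 + n20)) *
            (n11 / (n11 + n10) - n21 / (n21 + n20)) := by
  have hgap : n11 / (n11 + n10) - n21 / (n21 + n20)
      = (n11 / (n11 + n10) - (p 0 * n11 + p 1 * n10) / (n11 + n10))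
        + ((p 2 * n21 + p 3 * n20) / (n21 + n20) - n21 / (n21 + n20)) := by
    unfold disp at hd
    linarith
  have hmissed : 0 ≤ n11 * (1 - p 0) / (n11 + n21) := by
    have : 0 ≤ 1 - p 0 := sub_nonneg.mpr (hp.2 0)
    positivity
  have hfalse : 0 ≤ lam * (n20 * p 3 / (n10 + n20)) := by
    have : 0 ≤ p 3 := hp.1 3
    positivity
  have hloss := min_mul_add_le (by positivity) (by positivity) hmissed hfalse
    (mul_baseRate_sub_selRate_le (by positivity) (by positivity) h10.le (hp.1 1))
    (mul_selRate_sub_baseRate_le (by positivity) (by positivity) h21.le hlam.le (hp.2 2))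
  have hutil := util_le_one_sub (n20 := n20) (by positivity) h21.le h10.le (by positivity)
    hlam.le hp
  rw [hgap]
  linarith

end FourCells

theorem above_threshold_forces_positive_disparity_general
    (n11 n10 n21 n20 lam : ℝ)
    (h11 : 0 < n11) (h10 : 0 < n10) (h21 : 0 < n21) (h20 : 0 < n20) (hlam : 0 < lam)
    (p0 : Fin 4 → ℝ)
    (hU : 1 - min ((n11 + n10) / (n11 + n21)) (lam * (n21 + n20) / (n10 + n20)) *
            (n11 / (n11 + n10) - n21 / (n21 + n20))
          < util n11 n10 n21 n20 lam p0) :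
    ∀ p ∈ Set.Icc (0 : Fin 4 → ℝ) 1,
      util n11 n10 n21 n20 lam p0 ≤ util n11 n10 n21 n20 lam p →
      0 < |disp n11 n10 n21 n20 p| := by
  intro p hp hup
  refine abs_pos.mpr fun hd => ?_
  have := util_le_threshold_of_disp_eq_zero h11 h10 h21 h20 hlam hp hd
  linarith

/-- if a classifier `p₀` has utility strictly greater than the threshold
`U* = 1 - min(n₁/n₊, λ·n₂/n₋)·(BR₁ - BR₂)`, then every randomized classifier with
utility at least `U(p₀)` has strictly positive absolute disparity. -/
theorem above_threshold_forces_positive_disparity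
    (n11 n10 n21 n20 lam : ℝ)
    (h11 : 0 < n11) (h10 : 0 < n10) (h21 : 0 < n21) (h20 : 0 < n20) (hlam : 0 < lam)
    (hBR : n21 / (n21 + n20) < n11 / (n11 + n10))
    (p0 : Fin 4 → ℝ) (hp0 : p0 ∈ Set.Icc (0 : Fin 4 → ℝ) 1)
    (hU : 1 - min ((n11 + n10) / (n11 + n21)) (lam * (n21 + n20) / (n10 + n20)) *
            (n11 / (n11 + n10) - n21 / (n21 + n20))
          < util n11 n10 n21 n20 lam p0) :
    ∀ p ∈ Set.Icc (0 : Fin 4 → ℝ) 1,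
      util n11 n10 n21 n20 lam p0 ≤ util n11 n10 n21 n20 lam p →
      0 < |disp n11 n10 n21 n20 p| :=
  above_threshold_forces_positive_disparity_general n11 n10 n21 n20 lam h11 h10 h21 h20 hlam p0 hU
end
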